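/- Let S be a system of N-cones, L ⊆ N a primitive sublattice, let τ₁, …, τ_k be the maximal cones of the quotient fan of S by L, and let P denote the projection from N onto the lattice of the quotient fan. Denote by F(S) the set of all faces of the cones of S. Then for every i, τᵢ = conv( ⋃ { P^ℝ(σ) : σ ∈ F(S), P^ℝ(σ) ⊆ τᵢ } ). -/

import Mathlib

open Set

/-- The coercion of an integral vector in `ℤ^n` to a real vector in `ℝ^n`. -/
def toR {n : ℕ} (v : Fin n → ℤ) : Fin n → ℝ := fun i => (v i : ℝ)

/-- The scalar extension `F^ℝ : N^ℝ → N'^ℝ` of a `ℤ`-linear map `F : N → N'`,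
where `N = ℤ^n`, `N' = ℤ^m`. -/
noncomputable def extR {n m : ℕ} (F : (Fin n → ℤ) →ₗ[ℤ] (Fin m → ℤ)) :
    (Fin n → ℝ) →ₗ[ℝ] (Fin m → ℝ) :=
  (Matrix.of fun i j => ((F (Pi.single j 1)) i : ℝ)).mulVecLin

/-- A convex cone: a subset containing `0` that is closed under addition and
under multiplication by nonnegative scalars. -/
def IsCone {V : Type*} [AddCommGroup V] [Module ℝ V] (σ : Set V) : Prop :=
  0 ∈ σ ∧ (∀ x ∈ σ, ∀ y ∈ σ, x + y ∈ σ) ∧ ∀ c : ℝ, 0 ≤ c → ∀ x ∈ σ, c • x ∈ σ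

/-- The convex-cone hull of a set: the smallest convex cone containing it. -/
def coneHull {V : Type*} [AddCommGroup V] [Module ℝ V] (s : Set V) : Set V :=
  ⋂₀ {σ | IsCone σ ∧ s ⊆ σ}

/-- A rational polyhedral cone in `ℝ^n`: a convex cone generated by finitely
many vectors of the lattice `ℤ^n`. -/
def IsRatCone {n : ℕ} (σ : Set (Fin n → ℝ)) : Prop :=
  ∃ s : Finset (Fin n → ℤ), σ = coneHull (toR '' ↑s)

/-- A cone is strictly convex if it contains no nonzero linear subspace,
equivalently `σ ∩ (-σ) = {0}`. -/
def IsStrictlyConvexCone {V : Type*} [AddCommGroup V] [Module ℝ V] (σ : Set V) : Prop :=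
  ∀ x ∈ σ, -x ∈ σ → x = 0

/-- `τ` is a face of the convex cone `σ`: a subcone such that whenever
`x, y ∈ σ` and `x + y ∈ τ`, then `x, y ∈ τ`. -/
def IsFaceOf {V : Type*} [AddCommGroup V] [Module ℝ V] (τ σ : Set V) : Prop :=
  IsCone τ ∧ τ ⊆ σ ∧ ∀ x ∈ σ, ∀ y ∈ σ, x + y ∈ τ → x ∈ τ ∧ y ∈ τ

/-- A system of `N`-cones: a finite set of rational polyhedral cones in `ℝ^n`. -/
def IsConeSystem {n : ℕ} (S : Set (Set (Fin n → ℝ))) : Prop :=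
  S.Finite ∧ ∀ σ ∈ S, IsRatCone σ

/-- A quasifan: a finite set of rational polyhedral cones, closed under taking
faces, in which any two cones intersect in a common face. -/
def IsQuasifan {n : ℕ} (Δ : Set (Set (Fin n → ℝ))) : Prop :=
  IsConeSystem Δ ∧ (∀ σ ∈ Δ, ∀ τ, IsFaceOf τ σ → τ ∈ Δ) ∧
    ∀ σ ∈ Δ, ∀ σ' ∈ Δ, IsFaceOf (σ ∩ σ') σ

/-- A fan: a quasifan all of whose cones are strictly convex. -/
def IsFan {n : ℕ} (Δ : Set (Set (Fin n → ℝ))) : Prop :=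
  IsQuasifan Δ ∧ ∀ σ ∈ Δ, IsStrictlyConvexCone σ

/-- `F` defines a map of systems of cones (in particular of (quasi-)fans):
every cone of `S` is mapped by `F^ℝ` into some cone of `S'`. -/
def IsConeMap {n m : ℕ} (F : (Fin n → ℤ) →ₗ[ℤ] (Fin m → ℤ))
    (S : Set (Set (Fin n → ℝ))) (S' : Set (Set (Fin m → ℝ))) : Prop :=
  ∀ σ ∈ S, ∃ τ ∈ S', extR F '' σ ⊆ τ

/-- A sublattice `L ⊆ ℤ^n` is primitive if the quotient `ℤ^n/L` is
torsion-free. -/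
def IsPrimitive {n : ℕ} (L : Submodule ℤ (Fin n → ℤ)) : Prop :=
  ∀ (v : Fin n → ℤ) (k : ℤ), k ≠ 0 → k • v ∈ L → v ∈ L

/-- The set of maximal cones of a system of cones. -/
def maxCones {n : ℕ} (Δ : Set (Set (Fin n → ℝ))) : Set (Set (Fin n → ℝ)) :=
  {σ ∈ Δ | ∀ τ ∈ Δ, σ ⊆ τ → σ = τ}

/-- `ρ` is a ray (one-dimensional cone) of `Δ`. -/
def IsRay {n : ℕ} (Δ : Set (Set (Fin n → ℝ))) (ρ : Set (Fin n → ℝ)) : Prop :=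
  ρ ∈ Δ ∧ Module.finrank ℝ (Submodule.span ℝ ρ) = 1

/-- `Δt`, together with the surjection `P : ℤ^n → ℤ^m` onto the quotient of
`ℤ^n` by the primitive sublattice `L̂ = ker P ⊇ L`, is the quotient fan of the
system of cones `S` by `L`: the projection `P` defines a map of systems of
cones from `S` to the fan `Δt` and every map of systems of cones `F` from `S`
to a fan with `F(L) = 0` factors through `P` via a map of fans. -/
def IsQuotientFan {n m : ℕ} (S : Set (Set (Fin n → ℝ))) (L : Submodule ℤ (Fin n → ℤ))
    (P : (Fin n → ℤ) →ₗ[ℤ] (Fin m → ℤ)) (Δt : Set (Set (Fin m → ℝ))) : Prop :=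
  Function.Surjective P ∧ L ≤ LinearMap.ker P ∧ IsPrimitive (LinearMap.ker P) ∧
  IsFan Δt ∧ IsConeMap P S Δt ∧
  ∀ (k : ℕ) (F : (Fin n → ℤ) →ₗ[ℤ] (Fin k → ℤ)) (Δ' : Set (Set (Fin k → ℝ))),
    IsFan Δ' → IsConeMap F S Δ' → L ≤ LinearMap.ker F →
    ∃ Ft : (Fin m → ℤ) →ₗ[ℤ] (Fin k → ℤ), IsConeMap Ft Δt Δ' ∧ F = Ft.comp P

section ConeLemmas
variable {V : Type*} [AddCommGroup V] [Module ℝ V] {W : Type*} [AddCommGroup W] [Module ℝ W]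

theorem mem_coneHull {s : Set V} {x : V} :
    x ∈ coneHull s ↔ ∀ σ, IsCone σ → s ⊆ σ → x ∈ σ := by
  simp [coneHull, Set.mem_sInter, and_imp]

theorem isCone_coneHull (s : Set V) : IsCone (coneHull s) := by
  refine ⟨?_, ?_, ?_⟩
  · rw [mem_coneHull]; intro σ hσ _; exact hσ.1
  · intro x hx y hy; rw [mem_coneHull] at *
    intro σ hσ hs; exact hσ.2.1 x (hx σ hσ hs) y (hy σ hσ hs)
  · intro c hc x hx; rw [mem_coneHull] at *
    intro σ hσ hs; exact hσ.2.2 c hc x (hx σ hσ hs)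

theorem subset_coneHull (s : Set V) : s ⊆ coneHull s := by
  intro x hx; rw [mem_coneHull]; intro σ _ hs; exact hs hx

theorem coneHull_min {s σ : Set V} (hs : s ⊆ σ) (hσ : IsCone σ) : coneHull s ⊆ σ :=
  fun _ hx => mem_coneHull.1 hx σ hσ hs

theorem coneHull_mono {s t : Set V} (h : s ⊆ t) : coneHull s ⊆ coneHull t :=
  coneHull_min (h.trans (subset_coneHull t)) (isCone_coneHull t)

theorem isCone_inter {σ τ : Set V} (hσ : IsCone σ) (hτ : IsCone τ) : IsCone (σ ∩ τ) :=
  ⟨⟨hσ.1, hτ.1⟩, fun x hx y hy => ⟨hσ.2.1 x hx.1 y hy.1, hτ.2.1 x hx.2 y hy.2⟩,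
    fun c hc x hx => ⟨hσ.2.2 c hc x hx.1, hτ.2.2 c hc x hx.2⟩⟩

theorem IsCone.list_sum {σ : Set V} (hσ : IsCone σ) :
    ∀ l : List V, (∀ v ∈ l, v ∈ σ) → l.sum ∈ σ := by
  intro l
  induction l with
  | nil => intro _; simpa using hσ.1
  | cons a t ih =>
    intro h
    rw [List.sum_cons]
    exact hσ.2.1 a (h a List.mem_cons_self) t.sum (ih fun v hv => h v (List.mem_cons_of_mem a hv))

theorem mem_coneHull_iff {s : Set V} {x : V} :
    x ∈ coneHull s ↔ ∃ l : List (ℝ × V),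
      (∀ p ∈ l, 0 ≤ p.1 ∧ p.2 ∈ s) ∧ (l.map fun p => p.1 • p.2).sum = x := by
  constructor
  · intro hx
    set T : Set V := {x | ∃ l : List (ℝ × V),
      (∀ p ∈ l, 0 ≤ p.1 ∧ p.2 ∈ s) ∧ (l.map fun p => p.1 • p.2).sum = x} with hT
    show x ∈ T
    refine mem_coneHull.1 hx T ⟨⟨[], by simp, by simp⟩, ?_, ?_⟩ ?_
    · rintro x ⟨l₁, h₁, rfl⟩ y ⟨l₂, h₂, rfl⟩
      exact ⟨l₁ ++ l₂, fun p hp => (List.mem_append.1 hp).elim (h₁ p) (h₂ p), by simp⟩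
    · rintro c hc x ⟨l, hl, rfl⟩
      refine ⟨l.map fun p => (c * p.1, p.2), ?_, ?_⟩
      · rintro p hp
        obtain ⟨q, hq, rfl⟩ := List.mem_map.1 hp
        exact ⟨mul_nonneg hc (hl q hq).1, (hl q hq).2⟩
      · rw [List.map_map, List.smul_sum, List.map_map]
        congr 1
        ext p
        simp [mul_smul]
    · intro v hv
      exact ⟨[(1, v)], by simp [hv], by simp⟩
  · rintro ⟨l, hl, rfl⟩
    refine (isCone_coneHull s).list_sum _ ?_
    intro v hv
    obtain ⟨p, hp, rfl⟩ := List.mem_map.1 hv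
    exact (isCone_coneHull s).2.2 p.1 (hl p hp).1 p.2 (subset_coneHull s (hl p hp).2)

end ConeLemmas

section FaceLemmas
variable {V : Type*} [AddCommGroup V] [Module ℝ V] {W : Type*} [AddCommGroup W] [Module ℝ W]

theorem isFaceOf_refl {σ : Set V} (h : IsCone σ) : IsFaceOf σ σ :=
  ⟨h, subset_rfl, fun x hx y hy _ => ⟨hx, hy⟩⟩

theorem isFaceOf_trans {τ δ σ : Set V} (h₁ : IsFaceOf τ δ) (h₂ : IsFaceOf δ σ) :
    IsFaceOf τ σ := by
  refine ⟨h₁.1, h₁.2.1.trans h₂.2.1, ?_⟩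
  intro x hx y hy hxy
  obtain ⟨hxδ, hyδ⟩ := h₂.2.2 x hx y hy (h₁.2.1 hxy)
  exact h₁.2.2 x hxδ y hyδ hxy

/-- terms of a sum lying in a cone, with total in a face, all lie in the face -/
theorem face_list_sum {F σ : Set V} (hF : IsFaceOf F σ) (hσ : IsCone σ) :
    ∀ l : List V, (∀ v ∈ l, v ∈ σ) → l.sum ∈ F → ∀ v ∈ l, v ∈ F := by
  intro l
  induction l with
  | nil => intro _ _ v hv; simp at hv
  | cons a t ih =>
    intro hmem hsum v hv
    rw [List.sum_cons] at hsum
    have ha : a ∈ σ := hmem a List.mem_cons_self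
    have ht : t.sum ∈ σ := hσ.list_sum t fun w hw => hmem w (List.mem_cons_of_mem a hw)
    obtain ⟨haF, htF⟩ := hF.2.2 a ha t.sum ht hsum
    rcases List.mem_cons.1 hv with rfl | hv
    · exact haF
    · exact ih (fun w hw => hmem w (List.mem_cons_of_mem a hw)) htF v hv

/-- a face of a cone hull is the hull of the generators it contains -/
theorem face_eq_coneHull_inter {A δ : Set V} (h : IsFaceOf δ (coneHull A)) :
    δ = coneHull (A ∩ δ) := by
  apply Set.Subset.antisymm
  · intro x hx
    obtain ⟨l, hl, hsum⟩ := mem_coneHull_iff.1 (h.2.1 hx)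
    have hterm : ∀ v ∈ l.map (fun p : ℝ × V => p.1 • p.2), v ∈ δ := by
      apply face_list_sum h (isCone_coneHull A)
      · intro v hv
        obtain ⟨p, hp, rfl⟩ := List.mem_map.1 hv
        exact (isCone_coneHull A).2.2 p.1 (hl p hp).1 p.2 (subset_coneHull A (hl p hp).2)
      · rw [hsum]; exact hx
    rw [← hsum]
    apply (isCone_coneHull (A ∩ δ)).list_sum
    intro v hv
    obtain ⟨p, hp, rfl⟩ := List.mem_map.1 hv
    rcases eq_or_lt_of_le (hl p hp).1 with h0 | hpos
    · rw [← h0, zero_smul]; exact (isCone_coneHull (A ∩ δ)).1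
    · have h2δ : p.2 ∈ δ := by
        have := h.1.2.2 p.1⁻¹ (le_of_lt (inv_pos.2 hpos)) _
          (hterm _ (List.mem_map.2 ⟨p, hp, rfl⟩))
        rwa [inv_smul_smul₀ (ne_of_gt hpos)] at this
      exact (isCone_coneHull (A ∩ δ)).2.2 p.1 (hl p hp).1 p.2
        (subset_coneHull _ ⟨(hl p hp).2, h2δ⟩)
  · exact coneHull_min (Set.inter_subset_right) h.1

/-- preimage of a face cuts out a face -/
theorem face_preimage {f : V →ₗ[ℝ] W} {δ : Set V} {σ F : Set W}
    (hδ : IsCone δ) (himg : f '' δ ⊆ σ) (hF : IsFaceOf F σ) :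
    IsFaceOf (δ ∩ f ⁻¹' F) δ := by
  refine ⟨?_, Set.inter_subset_left, ?_⟩
  · refine ⟨⟨hδ.1, by simp [Set.mem_preimage, hF.1.1]⟩, ?_, ?_⟩
    · rintro x ⟨hx, hx'⟩ y ⟨hy, hy'⟩
      refine ⟨hδ.2.1 x hx y hy, ?_⟩
      simp only [Set.mem_preimage, map_add]
      exact hF.1.2.1 _ hx' _ hy'
    · rintro c hc x ⟨hx, hx'⟩
      refine ⟨hδ.2.2 c hc x hx, ?_⟩
      simp only [Set.mem_preimage, map_smul]
      exact hF.1.2.2 c hc _ hx'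
  · intro x hx y hy hxy
    have hfx : f x ∈ σ := himg ⟨x, hx, rfl⟩
    have hfy : f y ∈ σ := himg ⟨y, hy, rfl⟩
    have : f x + f y ∈ F := by rw [← map_add]; exact hxy.2
    obtain ⟨h1, h2⟩ := hF.2.2 _ hfx _ hfy this
    exact ⟨⟨hx, h1⟩, ⟨hy, h2⟩⟩

theorem inter_face_of_faces {A B δ δ' : Set V} (hδ : IsFaceOf δ A) (hδ' : IsFaceOf δ' B)
    (hAB : IsFaceOf (A ∩ B) A) : IsFaceOf (δ ∩ δ') δ := by
  refine ⟨isCone_inter hδ.1 hδ'.1, Set.inter_subset_left, ?_⟩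
  intro x hx y hy hxy
  have hxA : x ∈ A := hδ.2.1 hx
  have hyA : y ∈ A := hδ.2.1 hy
  have hAB' : x + y ∈ A ∩ B := ⟨hδ.2.1 hxy.1, hδ'.2.1 hxy.2⟩
  obtain ⟨hxAB, hyAB⟩ := hAB.2.2 x hxA y hyA hAB'
  obtain ⟨hxδ', hyδ'⟩ := hδ'.2.2 x hxAB.2 y hyAB.2 hxy.2
  exact ⟨⟨hx, hxδ'⟩, ⟨hy, hyδ'⟩⟩

/-- images of cones and hulls under linear maps -/
theorem isCone_image (f : V →ₗ[ℝ] W) {σ : Set V} (h : IsCone σ) : IsCone (f '' σ) := by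
  refine ⟨⟨0, h.1, map_zero f⟩, ?_, ?_⟩
  · rintro _ ⟨x, hx, rfl⟩ _ ⟨y, hy, rfl⟩
    exact ⟨x + y, h.2.1 x hx y hy, map_add f x y⟩
  · rintro c hc _ ⟨x, hx, rfl⟩
    exact ⟨c • x, h.2.2 c hc x hx, map_smul f c x⟩

theorem isCone_preimage (f : V →ₗ[ℝ] W) {σ : Set W} (h : IsCone σ) : IsCone (f ⁻¹' σ) := by
  refine ⟨?_, ?_, ?_⟩
  · simp [Set.mem_preimage, h.1]
  · intro x hx y hy; simp only [Set.mem_preimage, map_add]; exact h.2.1 _ hx _ hy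
  · intro c hc x hx; simp only [Set.mem_preimage, map_smul]; exact h.2.2 c hc _ hx

theorem image_coneHull (f : V →ₗ[ℝ] W) (s : Set V) :
    f '' coneHull s = coneHull (f '' s) := by
  apply Set.Subset.antisymm
  · rintro _ ⟨x, hx, rfl⟩
    refine mem_coneHull.1 hx (f ⁻¹' coneHull (f '' s)) (isCone_preimage f (isCone_coneHull _)) ?_
    intro v hv
    exact subset_coneHull _ ⟨v, hv, rfl⟩
  · exact coneHull_min (Set.image_mono (subset_coneHull s)) (isCone_image f (isCone_coneHull s))

end FaceLemmas

section ExtRLemmas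

theorem extR_toR {n m : ℕ} (F : (Fin n → ℤ) →ₗ[ℤ] (Fin m → ℤ)) (v : Fin n → ℤ) :
    extR F (toR v) = toR (F v) := by
  have hv : F v = ∑ j, v j • F (Pi.single j 1) := by
    rw [← Finset.univ_sum_single v, map_sum]
    apply Finset.sum_congr rfl
    intro j _
    rw [← map_smul]
    congr 1
    rw [← Pi.single_smul]
    simp
  funext i
  rw [hv]
  simp only [extR, Matrix.mulVecLin_apply, Matrix.mulVec, dotProduct, Matrix.of_apply,
    toR, Finset.sum_apply, Pi.smul_apply, smul_eq_mul]
  push_cast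
  apply Finset.sum_congr rfl
  intro j _
  ring

theorem extR_id_of {k : ℕ} {F : (Fin k → ℤ) →ₗ[ℤ] (Fin k → ℤ)} (h : ∀ x, F x = x)
    (v : Fin k → ℝ) : extR F v = v := by
  funext i
  simp only [extR, Matrix.mulVecLin_apply, Matrix.mulVec, dotProduct, Matrix.of_apply, h,
    Pi.single_apply]
  push_cast
  simp [ite_mul, Finset.sum_ite_eq]

end ExtRLemmas


section RatLemmas
variable {k : ℕ}

theorem isCone_of_rat {σ : Set (Fin k → ℝ)} (h : IsRatCone σ) : IsCone σ := by
  obtain ⟨s, rfl⟩ := h; exact isCone_coneHull _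

theorem isRatCone_face {X δ : Set (Fin k → ℝ)} (hX : IsRatCone X) (h : IsFaceOf δ X) :
    IsRatCone δ := by
  classical
  obtain ⟨s, rfl⟩ := hX
  refine ⟨s.filter (fun g => toR g ∈ δ), ?_⟩
  have hsets : toR '' ↑s ∩ δ = toR '' ↑(s.filter (fun g => toR g ∈ δ)) := by
    ext v
    constructor
    · rintro ⟨⟨g, hg, rfl⟩, hv⟩
      exact ⟨g, Finset.mem_coe.2 (Finset.mem_filter.2 ⟨Finset.mem_coe.1 hg, hv⟩), rfl⟩
    · rintro ⟨g, hg, rfl⟩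
      rw [Finset.mem_coe, Finset.mem_filter] at hg
      exact ⟨⟨g, hg.1, rfl⟩, hg.2⟩
  conv_lhs => rw [face_eq_coneHull_inter h, hsets]

theorem faces_finite {X : Set (Fin k → ℝ)} (hX : IsRatCone X) :
    {δ | IsFaceOf δ X}.Finite := by
  obtain ⟨s, rfl⟩ := hX
  apply Set.Finite.subset (Set.Finite.image coneHull
    (Set.Finite.finite_subsets ((s.finite_toSet).image toR)))
  intro δ hδ
  exact ⟨toR '' ↑s ∩ δ, Set.inter_subset_left, (face_eq_coneHull_inter hδ).symm⟩

theorem exists_max_superset {Δ : Set (Set (Fin k → ℝ))} (hfin : Δ.Finite)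
    {σ : Set (Fin k → ℝ)} (hσ : σ ∈ Δ) : ∃ t ∈ maxCones Δ, σ ⊆ t := by
  obtain ⟨t, ht, hmax⟩ := Set.Finite.exists_maximalFor id {τ ∈ Δ | σ ⊆ τ}
    (hfin.subset (Set.sep_subset _ _)) ⟨σ, hσ, Set.Subset.rfl⟩
  refine ⟨t, ⟨ht.1, ?_⟩, ht.2⟩
  intro τ hτ hsub
  exact Set.Subset.antisymm hsub (hmax ⟨hτ, ht.2.trans hsub⟩ hsub)

end RatLemmas

section Quotient
variable {n m : ℕ}

/-- faces of cones of `S` whose image lies in `t` -/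
def famQ (S : Set (Set (Fin n → ℝ))) (P : (Fin n → ℤ) →ₗ[ℤ] (Fin m → ℤ))
    (t : Set (Fin m → ℝ)) : Set (Set (Fin n → ℝ)) :=
  {σ' | (∃ σ ∈ S, IsFaceOf σ' σ) ∧ extR P '' σ' ⊆ t}

noncomputable def UQ (S : Set (Set (Fin n → ℝ))) (P : (Fin n → ℤ) →ₗ[ℤ] (Fin m → ℤ))
    (t : Set (Fin m → ℝ)) : Set (Fin m → ℝ) :=
  ⋃₀ ((fun σ' => extR P '' σ') '' famQ S P t)

noncomputable def CQ (S : Set (Set (Fin n → ℝ))) (P : (Fin n → ℤ) →ₗ[ℤ] (Fin m → ℤ))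
    (t : Set (Fin m → ℝ)) : Set (Fin m → ℝ) :=
  coneHull (UQ S P t)

variable (S : Set (Set (Fin n → ℝ))) (P : (Fin n → ℤ) →ₗ[ℤ] (Fin m → ℤ))

theorem UQ_subset (t : Set (Fin m → ℝ)) : UQ S P t ⊆ t := by
  rintro u ⟨Y, ⟨σ', hσ', rfl⟩, hu⟩
  exact hσ'.2 hu

theorem CQ_subset {t : Set (Fin m → ℝ)} (ht : IsCone t) : CQ S P t ⊆ t :=
  coneHull_min (UQ_subset S P t) ht

theorem CQ_claimA {i j : Set (Fin m → ℝ)} (hi : IsCone i) (hij : IsFaceOf (i ∩ j) i) :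
    CQ S P i ∩ (i ∩ j) ⊆ CQ S P j := by
  rintro z ⟨hzC, hzij⟩
  obtain ⟨l, hl, hsum⟩ := mem_coneHull_iff.1 hzC
  have hterms : ∀ v ∈ l.map (fun p : ℝ × (Fin m → ℝ) => p.1 • p.2), v ∈ i ∩ j := by
    apply face_list_sum hij hi
    · intro v hv
      obtain ⟨p, hp, rfl⟩ := List.mem_map.1 hv
      exact hi.2.2 p.1 (hl p hp).1 p.2 (UQ_subset S P i (hl p hp).2)
    · rw [hsum]; exact hzij
  rw [← hsum]
  apply (isCone_coneHull _).list_sum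
  intro v hv
  obtain ⟨p, hp, rfl⟩ := List.mem_map.1 hv
  rcases eq_or_lt_of_le (hl p hp).1 with h0 | hpos
  · rw [← h0, zero_smul]; exact (isCone_coneHull _).1
  have h2 : p.2 ∈ i ∩ j := by
    have := hij.1.2.2 p.1⁻¹ (le_of_lt (inv_pos.2 hpos)) _
      (hterms _ (List.mem_map.2 ⟨p, hp, rfl⟩))
    rwa [inv_smul_smul₀ (ne_of_gt hpos)] at this
  obtain ⟨Y, ⟨σ', hσ', rfl⟩, hpY⟩ := (hl p hp).2
  obtain ⟨w, hwσ', hw⟩ := hpY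
  obtain ⟨⟨σ, hσS, hface⟩, himg⟩ := hσ'
  have hface'' : IsFaceOf (σ' ∩ (extR P) ⁻¹' (i ∩ j)) σ' := face_preimage hface.1 himg hij
  have hmemfam : (σ' ∩ (extR P) ⁻¹' (i ∩ j)) ∈ famQ S P j := by
    refine ⟨⟨σ, hσS, isFaceOf_trans hface'' hface⟩, ?_⟩
    rintro _ ⟨w', hw', rfl⟩
    exact hw'.2.2
  have hp2U : p.2 ∈ UQ S P j := by
    have hYmem : (extR P '' (σ' ∩ (extR P) ⁻¹' (i ∩ j))) ∈
        ((fun σ'' => extR P '' σ'') '' famQ S P j) := ⟨_, hmemfam, rfl⟩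
    apply Set.subset_sUnion_of_mem hYmem
    refine ⟨w, ⟨hwσ', ?_⟩, hw⟩
    rw [Set.mem_preimage, hw]
    exact h2
  exact (isCone_coneHull _).2.2 p.1 (hl p hp).1 p.2 (subset_coneHull _ hp2U)

theorem CQ_inter_face {i j : Set (Fin m → ℝ)} (hi : IsCone i) (hj : IsCone j)
    (hij : IsFaceOf (i ∩ j) i) : IsFaceOf (CQ S P i ∩ CQ S P j) (CQ S P i) := by
  refine ⟨isCone_inter (isCone_coneHull _) (isCone_coneHull _), Set.inter_subset_left, ?_⟩
  intro x hx y hy hxy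
  have hCi : CQ S P i ⊆ i := CQ_subset S P hi
  have hCj : CQ S P j ⊆ j := CQ_subset S P hj
  have hxyij : x + y ∈ i ∩ j := ⟨hCi hxy.1, hCj hxy.2⟩
  obtain ⟨hxij, hyij⟩ := hij.2.2 x (hCi hx) y (hCi hy) hxyij
  exact ⟨⟨hx, CQ_claimA S P hi hij ⟨hx, hxij⟩⟩, ⟨hy, CQ_claimA S P hi hij ⟨hy, hyij⟩⟩⟩

theorem isRatCone_CQ (hS : IsConeSystem S) (t : Set (Fin m → ℝ)) :
    IsRatCone (CQ S P t) := by
  classical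
  obtain ⟨hfin, hrat⟩ := hS
  simp only [IsRatCone] at hrat
  choose! gens hgens using hrat
  obtain ⟨G, hGmem⟩ : ∃ G : Finset (Fin n → ℤ), ∀ σ ∈ S, ∀ g ∈ gens σ, g ∈ G := by
    refine ⟨hfin.toFinset.sup gens, ?_⟩
    intro σ hσ g hg
    exact Finset.le_sup (f := gens) (hfin.mem_toFinset.2 hσ) hg
  have hBX : toR '' ↑((G.image P).filter (fun w => toR w ∈ UQ S P t))
      = (extR P '' (toR '' ↑G)) ∩ UQ S P t := by
    ext z
    constructor
    · rintro ⟨w, hw, rfl⟩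
      simp only [Finset.coe_filter, Set.mem_setOf_eq, Finset.mem_coe, Finset.mem_image] at hw
      obtain ⟨⟨g, hg, rfl⟩, hU⟩ := hw
      exact ⟨⟨toR g, ⟨g, hg, rfl⟩, extR_toR P g⟩, hU⟩
    · rintro ⟨⟨_, ⟨g, hg, rfl⟩, rfl⟩, hU⟩
      refine ⟨P g, ?_, (extR_toR P g).symm⟩
      simp only [Finset.coe_filter, Set.mem_setOf_eq, Finset.mem_coe, Finset.mem_image]
      rw [extR_toR P g] at hU
      exact ⟨⟨g, hg, rfl⟩, hU⟩
  refine ⟨(G.image P).filter (fun w => toR w ∈ UQ S P t), ?_⟩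
  rw [hBX]
  apply Set.Subset.antisymm
  · apply coneHull_min ?_ (isCone_coneHull _)
    rintro u ⟨Y, ⟨σ', hσ', rfl⟩, hu⟩
    change u ∈ extR P '' σ' at hu
    obtain ⟨⟨σ, hσS, hface⟩, himg⟩ := hσ'
    have hσeq := hgens σ hσS
    have hface' : IsFaceOf σ' (coneHull (toR '' ↑(gens σ))) := by rwa [hσeq] at hface
    have hσ'eq := face_eq_coneHull_inter hface'
    have himg' : extR P '' σ' = coneHull (extR P '' (toR '' ↑(gens σ) ∩ σ')) := by
      conv_lhs => rw [hσ'eq]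
      rw [image_coneHull]
    have hsubXU : extR P '' (toR '' ↑(gens σ) ∩ σ')
        ⊆ (extR P '' (toR '' ↑G)) ∩ UQ S P t := by
      rintro _ ⟨w, ⟨⟨g, hg, rfl⟩, hwσ'⟩, rfl⟩
      refine ⟨?_, ?_⟩
      · show extR P (toR g) ∈ extR P '' (toR '' ↑G)
        exact ⟨toR g, ⟨g, Finset.mem_coe.2 (hGmem σ hσS g hg), rfl⟩, rfl⟩
      · have hY : extR P '' σ' ∈ (fun σ'' => extR P '' σ'') '' famQ S P t :=
          ⟨σ', ⟨⟨σ, hσS, hface⟩, himg⟩, rfl⟩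
        exact Set.subset_sUnion_of_mem hY ⟨toR g, hwσ', rfl⟩
    rw [himg'] at hu
    exact coneHull_min (hsubXU.trans (subset_coneHull _)) (isCone_coneHull _) hu
  · exact coneHull_mono Set.inter_subset_right

end Quotient

/-- Let `S` be a system of `N`-cones, `L ⊆ N` a primitive
sublattice, `τ 1, …, τ k` the maximal cones of the quotient fan `Δt` of `S`
by `L` and `P` the projection from `N` onto the lattice of the quotient fan.
Then every maximal cone `τ` of `Δt` is the convex-cone hull of the union of
all the sets `P^ℝ(σ')`, where `σ'` ranges over the faces of cones of `S`
with `P^ℝ(σ') ⊆ τ`. -/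

theorem maxcone_of_quotient_fan {n m : ℕ} (S : Set (Set (Fin n → ℝ)))
    (hS : IsConeSystem S) (L : Submodule ℤ (Fin n → ℤ)) (hL : IsPrimitive L)
    (P : (Fin n → ℤ) →ₗ[ℤ] (Fin m → ℤ)) (Δt : Set (Set (Fin m → ℝ)))
    (hquot : IsQuotientFan S L P Δt)
    (τ : Set (Fin m → ℝ)) (hτ : τ ∈ maxCones Δt) :
    τ = coneHull (⋃₀ ((fun σ' => extR P '' σ') ''
      {σ' | (∃ σ ∈ S, IsFaceOf σ' σ) ∧ extR P '' σ' ⊆ τ})) := by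
  classical
  obtain ⟨hPsurj, hLP, hprim, hfan, hmap, huniv⟩ := hquot
  obtain ⟨hτΔ, hτmax⟩ := hτ
  have hfinΔ : Δt.Finite := hfan.1.1.1
  have hratΔ : ∀ t ∈ Δt, IsRatCone t := hfan.1.1.2
  have hconeΔ : ∀ t ∈ Δt, IsCone t := fun t ht => isCone_of_rat (hratΔ t ht)
  have hfaceΔ : ∀ i ∈ Δt, ∀ j ∈ Δt, IsFaceOf (i ∩ j) i := hfan.1.2.2
  set Δ' : Set (Set (Fin m → ℝ)) := {δ | ∃ t ∈ maxCones Δt, IsFaceOf δ (CQ S P t)} with hΔ'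
  have hCQrat : ∀ t, IsRatCone (CQ S P t) := fun t => isRatCone_CQ S P hS t
  have hfan' : IsFan Δ' := by
    refine ⟨⟨⟨?_, ?_⟩, ?_, ?_⟩, ?_⟩
    · have hsub : Δ' ⊆ ⋃ t ∈ maxCones Δt, {δ | IsFaceOf δ (CQ S P t)} := by
        rintro δ ⟨t, ht, hδ⟩
        exact Set.mem_biUnion ht hδ
      exact Set.Finite.subset (Set.Finite.biUnion (hfinΔ.subset (Set.sep_subset _ _))
        (fun t _ => faces_finite (hCQrat t))) hsub
    · rintro δ ⟨t, ht, hδ⟩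
      exact isRatCone_face (hCQrat t) hδ
    · rintro δ ⟨t, ht, hδ⟩ δ'' h''
      exact ⟨t, ht, isFaceOf_trans h'' hδ⟩
    · rintro δ ⟨ti, hti, hδ⟩ δ' ⟨tj, htj, hδ'⟩
      exact inter_face_of_faces hδ hδ'
        (CQ_inter_face S P (hconeΔ ti hti.1) (hconeΔ tj htj.1) (hfaceΔ ti hti.1 tj htj.1))
    · rintro δ ⟨t, ht, hδ⟩ x hx hnx
      exact hfan.2 t ht.1 x (CQ_subset S P (hconeΔ t ht.1) (hδ.2.1 hx))
        (CQ_subset S P (hconeΔ t ht.1) (hδ.2.1 hnx))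
  have hmap' : IsConeMap P S Δ' := by
    intro σ hσ
    obtain ⟨t0, ht0, hsub⟩ := hmap σ hσ
    obtain ⟨t, htmax, hle⟩ := exists_max_superset hfinΔ ht0
    refine ⟨CQ S P t, ⟨t, htmax, isFaceOf_refl (isCone_coneHull _)⟩, ?_⟩
    have hmem : σ ∈ famQ S P t :=
      ⟨⟨σ, hσ, isFaceOf_refl (isCone_of_rat (hS.2 σ hσ))⟩, hsub.trans hle⟩
    exact (Set.subset_sUnion_of_mem ⟨σ, hmem, rfl⟩ :
      extR P '' σ ⊆ UQ S P t).trans (subset_coneHull _)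
  obtain ⟨Ft, hFt, hfac⟩ := huniv m P Δ' hfan' hmap' hLP
  have hFtid : ∀ x, Ft x = x := by
    intro y
    obtain ⟨x, rfl⟩ := hPsurj y
    exact (DFunLike.congr_fun hfac x).symm
  obtain ⟨δ, ⟨t, htmax, hδface⟩, himg⟩ := hFt τ hτΔ
  have hτδ : τ ⊆ δ := by
    intro x hx
    have h1 : extR Ft x ∈ δ := himg ⟨x, hx, rfl⟩
    rwa [extR_id_of hFtid x] at h1
  have hCt : CQ S P t ⊆ t := CQ_subset S P (hconeΔ t htmax.1)
  have hτt : τ ⊆ t := (hτδ.trans hδface.2.1).trans hCt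
  have hteq : τ = t := hτmax t htmax.1 hτt
  subst hteq
  show τ = CQ S P τ
  exact Set.Subset.antisymm (hτδ.trans hδface.2.1) hCt
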